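/- Let G be a δ-hyperbolic group with boundary ∂G. For every l > 8δ there exists a finite open cover (U_i)_{i=1}^n of ∂G such that for every i ≤ n and all x, x' ∈ U_i, x' ∈ 𝒩_x^l, i.e., whenever Q(m) = x and Q(m') = x' for DSGs m, m', we have d_S(c_m^{1}(i), c_{m'}^{1}(i)) ≤ 2δ for all i ≤ l. -/

import Mathlib

/-!
Call two boundary points `n`-close when all their geodesic rays from `1` `2δ`-fellow-travel up to
time `n`; DSG rays from `1` are such rays. Thin triangles show that closeness is transitive at the
cost of `5δ + 1` in `n`, that rays agreeing on a long initial segment give close points, and that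
points whose rays from `1` meet at time `n + 5δ + 1` are `n`-close; since spheres in `G` are
finite, finitely many centres suffice. The closeness balls need not be open in `∂G`, but their
interiors for the topology generated by all balls are open in `∂G` by the cylinder property, and
transitivity shows that they still contain the balls of a larger index.
-/

/-- The word metric on a group `G` with respect to a generating set `S`. -/
noncomputable def wordDist {G : Type*} [Group G] (S : Set G) (g h : G) : ℕ :=
  sInf {n | ∃ l : List G, (∀ x ∈ l, x ∈ S) ∧ l.length = n ∧ g = h * l.prod}

/-- `S` is a finite symmetric generating set of `G`. -/
def IsFinSymmGenSet {G : Type*} [Group G] (S : Set G) : Prop :=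
  S.Finite ∧ (∀ s ∈ S, s⁻¹ ∈ S) ∧ Subgroup.closure S = ⊤

/-- A discrete geodesic segment from `g` to `h` with respect to the integer-valued
metric `d`, parametrized on `[0, d g h]`. -/
def IsGeodesicSeg {G : Type*} (d : G → G → ℕ) (c : ℕ → G) (g h : G) : Prop :=
  c 0 = g ∧ c (d g h) = h ∧
    ∀ i j : ℕ, i ≤ d g h → j ≤ d g h → d (c i) (c j) = Nat.dist i j

/-- A discrete geodesic ray: an isometric embedding `c : ℕ → G`. -/
def IsGeodesicRay {G : Type*} (d : G → G → ℕ) (c : ℕ → G) : Prop :=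
  ∀ i j : ℕ, d (c i) (c j) = Nat.dist i j

/-- Two rays are asymptotic if their images are at finite Hausdorff distance. -/
def Asymptotic {G : Type*} (d : G → G → ℕ) (c c' : ℕ → G) : Prop :=
  ∃ K : ℕ, (∀ t : ℕ, ∃ s : ℕ, d (c t) (c' s) ≤ K) ∧ (∀ s : ℕ, ∃ t : ℕ, d (c' s) (c t) ≤ K)

/-- Rips δ-hyperbolicity of the integer-valued metric `d`: each side of any discrete
geodesic triangle is contained in the δ-neighborhood of the union of the other two sides. -/
def DiscHyperbolic {G : Type*} (d : G → G → ℕ) (δ : ℕ) : Prop :=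
  ∀ x y z : G, ∀ cxy cyz czx : ℕ → G,
    IsGeodesicSeg d cxy x y → IsGeodesicSeg d cyz y z → IsGeodesicSeg d czx z x →
    ∀ i ≤ d x y, ∃ p ∈ cyz '' Set.Iic (d y z) ∪ czx '' Set.Iic (d z x), d (cxy i) p ≤ δ

/-- The ray determined by a map `m : G → G` starting at `g`:
each step multiplies by the value of `m` at the current position. -/
def dsgRay {G : Type*} [Group G] (m : G → G) (g : G) : ℕ → G
  | 0 => g
  | n + 1 => dsgRay m g n * m (dsgRay m g n)

/-- A directed system of geodesics (DSG): a map `m : G → S` all of whose rays are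
geodesic rays, any two of which are asymptotic. -/
def IsDSG {G : Type*} [Group G] (d : G → G → ℕ) (S : Set G) (m : G → G) : Prop :=
  (∀ g : G, m g ∈ S) ∧ (∀ g : G, IsGeodesicRay d (dsgRay m g)) ∧
    ∀ g h : G, Asymptotic d (dsgRay m g) (dsgRay m h)

/-- The space of DSGs on `G`. -/
def DSGs {G : Type*} [Group G] (d : G → G → ℕ) (S : Set G) := {m : G → G // IsDSG d S m}

/-- The space of geodesic rays in `G`. -/
def GeodesicRays {G : Type*} (d : G → G → ℕ) := {c : ℕ → G // IsGeodesicRay d c}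

/-- The Gromov boundary of `G`, as the quotient of the space of geodesic rays by the
relation of being asymptotic (finite Hausdorff distance). -/
def GromovBoundary {G : Type*} (d : G → G → ℕ) :=
  Quot (fun c c' : GeodesicRays d => Asymptotic d c.1 c'.1)

/-- The topology on geodesic rays: uniform convergence on bounded sets, which for the
discrete group `G` is the product (pointwise convergence) topology. -/
def raysTop {G : Type*} (d : G → G → ℕ) : TopologicalSpace (GeodesicRays d) :=
  TopologicalSpace.induced (fun c => (c.1 : ℕ → G))
    (@Pi.topologicalSpace ℕ (fun _ => G) (fun _ => ⊥))

/-- The quotient topology on the Gromov boundary. -/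
def boundaryTop {G : Type*} (d : G → G → ℕ) : TopologicalSpace (GromovBoundary d) :=
  (raysTop d).coinduced (Quot.mk _)

/-- The canonical surjection `Q : 𝒟 → ∂G` sending a DSG to the class of its ray at `1`. -/
def Qmap {G : Type*} [Group G] (d : G → G → ℕ) (S : Set G) (m : DSGs d S) :
    GromovBoundary d :=
  Quot.mk _ ⟨dsgRay m.1 1, m.2.2.1 1⟩

/-- The topology `τ` on the space of DSGs, generated by the neighborhoods `𝒩_m^{l,D}`. -/
def dsgTop {G : Type*} [Group G] (d : G → G → ℕ) (S : Set G) (δ : ℕ) :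
    TopologicalSpace (DSGs d S) :=
  TopologicalSpace.generateFrom
    {U | ∃ (m : DSGs d S) (l D : ℕ), 8 * δ < l ∧ 2 * δ ≤ D ∧
      U = {m' : DSGs d S | ∀ i ≤ l, d (dsgRay m.1 1 i) (dsgRay m'.1 1 i) ≤ D}}

/-- The word metric is left-invariant. -/
theorem wordDist_mul_left {G : Type*} [Group G] (S : Set G) (a g h : G) :
    wordDist S (a * g) (a * h) = wordDist S g h := by
  unfold wordDist
  congr 1
  ext n
  constructor
  · rintro ⟨l, h1, h2, h3⟩
    exact ⟨l, h1, h2, by rw [mul_assoc] at h3; exact mul_left_cancel h3⟩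
  · rintro ⟨l, h1, h2, h3⟩
    exact ⟨l, h1, h2, by rw [mul_assoc, ← h3]⟩

/-- The canonical action of `G` on its Gromov boundary, induced by left translation
of geodesic rays. -/
def boundaryAct {G : Type*} [Group G] (S : Set G) (g : G) :
    GromovBoundary (wordDist S) → GromovBoundary (wordDist S) :=
  Quot.map
    (fun c => ⟨fun t => g * c.1 t, fun i j => by
      rw [wordDist_mul_left]; exact c.2 i j⟩)
    (by
      rintro c c' ⟨K, h1, h2⟩
      refine ⟨K, fun t => ?_, fun s => ?_⟩
      · obtain ⟨s, hs⟩ := h1 t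
        exact ⟨s, by simpa [wordDist_mul_left] using hs⟩
      · obtain ⟨t, ht⟩ := h2 s
        exact ⟨t, by simpa [wordDist_mul_left] using ht⟩)

open Filter Topology

theorem exists_frequently_eqOn_Iic {α : Type*} {A : ℕ → Set α} (hA : ∀ i, (A i).Finite)
    (f : ℕ → ℕ → α) (hf : ∀ n i, f n i ∈ A i) :
    ∃ γ : ℕ → α, ∀ m N, ∃ n ≥ N, ∀ i ≤ m, f n i = γ i := by
  let _ : TopologicalSpace α := ⊥
  have _ : DiscreteTopology α := ⟨rfl⟩
  -- Tychonoff: a cluster point of `f` in the compact product `∏ i, A i`.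
  obtain ⟨γ, -, hγ⟩ := (isCompact_univ_pi fun i => (hA i).isCompact).exists_mapClusterPt
    (f := atTop) (u := f) (tendsto_principal.mpr (Eventually.of_forall fun n i _ => hf n i))
  refine ⟨γ, fun m N => ?_⟩
  have hcyl : (Set.Iic m).pi (fun i => {γ i}) ∈ 𝓝 γ :=
    (isOpen_set_pi (Set.finite_Iic m) fun i _ => isOpen_discrete _).mem_nhds (by simp)
  obtain ⟨n, hn, hfn⟩ := frequently_atTop.mp (mapClusterPt_iff_frequently.mp hγ _ hcyl) N
  exact ⟨n, hn, fun i hi => hfn i hi⟩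

section InnerBall

variable {X : Type*} {R : ℕ → X → X → Prop} {C : ℕ}

/-- The interior of the `R n`-ball around `x` for the topology in which a set is open when it
contains an `R j`-ball around each of its points. -/
def innerBall (R : ℕ → X → X → Prop) (n : ℕ) (x : X) : Set X :=
  {y | ∃ j, ∀ z, R j y z → R n x z}

theorem innerBall_subset (hrefl : ∀ j x, R j x x) (n : ℕ) (x : X) :
    innerBall R n x ⊆ {y | R n x y} :=
  fun y ⟨j, hj⟩ => show R n x y from hj y (hrefl j y)

theorem mem_innerBall (htrans : ∀ n x y z, R (n + C) x y → R (n + C) y z → R n x z) {n : ℕ}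
    {x y : X} (h : R (n + C) x y) : y ∈ innerBall R n x :=
  ⟨n + C, fun _ hz => htrans n x y _ h hz⟩

theorem exists_forall_mem_innerBall
    (htrans : ∀ n x y z, R (n + C) x y → R (n + C) y z → R n x z) {n : ℕ} {x y : X}
    (hy : y ∈ innerBall R n x) :
    ∃ j, ∀ z, R j y z → z ∈ innerBall R n x := by
  obtain ⟨j, hj⟩ := hy
  exact ⟨j + C, fun z hz => ⟨j + C, fun w hw => hj w (htrans j y z w hz hw)⟩⟩

end InnerBall

section Geodesics

variable {α : Type*} {d : α → α → ℕ} {c : ℕ → α}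

theorem IsGeodesicSeg.dist_start {g h : α} (hc : IsGeodesicSeg d c g h) {i : ℕ}
    (hi : i ≤ d g h) : d g (c i) = i := by
  simpa [hc.1, Nat.dist] using hc.2.2 0 i (Nat.zero_le _) hi

theorem IsGeodesicRay.dist_zero (hc : IsGeodesicRay d c) (n : ℕ) : d (c 0) (c n) = n := by
  simpa [Nat.dist] using hc 0 n

theorem IsGeodesicRay.isGeodesicSeg (hc : IsGeodesicRay d c) (n : ℕ) :
    IsGeodesicSeg d c (c 0) (c n) :=
  ⟨rfl, by rw [hc.dist_zero], fun i j _ _ => hc i j⟩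

theorem isGeodesicRay_of_frequently_eqOn {g : α} {b : ℕ → α} {σ : ℕ → ℕ → α}
    {γ : ℕ → α} (hσ : ∀ n, IsGeodesicSeg d (σ n) g (b n))
    (hlim : ∀ m N, ∃ n ≥ N, m ≤ d g (b n) ∧ ∀ i ≤ m, σ n i = γ i) :
    IsGeodesicRay d γ ∧ γ 0 = g := by
  refine ⟨fun i j => ?_, ?_⟩
  · obtain ⟨n, -, hn, h⟩ := hlim (max i j) 0
    rw [← h i (le_max_left _ _), ← h j (le_max_right _ _)]
    exact (hσ n).2.2 i j (by omega) (by omega)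
  · obtain ⟨n, -, -, h⟩ := hlim 0 0
    rw [← h 0 le_rfl, (hσ n).1]

theorem Asymptotic.symm {c' : ℕ → α} (h : Asymptotic d c c') : Asymptotic d c' c :=
  let ⟨K, h₁, h₂⟩ := h
  ⟨K, h₂, h₁⟩

end Geodesics

section WordMetric

variable {G : Type*} [Group G] {S : Set G}

theorem IsFinSymmGenSet.exists_list_prod_eq (hS : IsFinSymmGenSet S) (g : G) :
    ∃ l : List G, (∀ x ∈ l, x ∈ S) ∧ l.prod = g := by
  have hg : g ∈ Submonoid.closure (S ∪ S⁻¹) := by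
    rw [← Subgroup.closure_toSubmonoid, hS.2.2]
    trivial
  rw [Set.union_eq_left.mpr fun s hs => by simpa using hS.2.1 _ hs] at hg
  exact Submonoid.exists_list_of_mem_closure hg

theorem wordDist_le_length {l : List G} (hl : ∀ x ∈ l, x ∈ S) {g h : G}
    (hgh : g = h * l.prod) : wordDist S g h ≤ l.length :=
  Nat.sInf_le ⟨l, hl, rfl, hgh⟩

theorem exists_list_length_eq_wordDist (hS : IsFinSymmGenSet S) (g h : G) :
    ∃ l : List G, (∀ x ∈ l, x ∈ S) ∧ l.length = wordDist S g h ∧ g = h * l.prod := by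
  obtain ⟨l, hl, hprod⟩ := hS.exists_list_prod_eq (h⁻¹ * g)
  exact Nat.sInf_mem
    (s := {n | ∃ l : List G, (∀ x ∈ l, x ∈ S) ∧ l.length = n ∧ g = h * l.prod})
    ⟨l.length, l, hl, rfl, by rw [hprod, mul_inv_cancel_left]⟩

theorem wordDist_self (g : G) : wordDist S g g = 0 :=
  Nat.le_zero.mp (wordDist_le_length (l := []) (by simp) (by simp))

theorem wordDist_comm (hS : IsFinSymmGenSet S) (g h : G) : wordDist S g h = wordDist S h g := by
  suffices key : ∀ a b : G, wordDist S a b ≤ wordDist S b a from le_antisymm (key g h) (key h g)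
  intro a b
  obtain ⟨l, hl, hlen, hprod⟩ := exists_list_length_eq_wordDist hS b a
  calc wordDist S a b ≤ (l.map (·⁻¹)).reverse.length :=
        wordDist_le_length (by simpa using fun x hx => by simpa using hS.2.1 _ (hl _ hx))
          (by rw [← List.prod_inv_reverse, hprod, mul_inv_cancel_right])
    _ = wordDist S b a := by simp [hlen]

theorem wordDist_triangle (hS : IsFinSymmGenSet S) (g h k : G) :
    wordDist S g k ≤ wordDist S g h + wordDist S h k := by
  obtain ⟨l₁, hl₁, hlen₁, hprod₁⟩ := exists_list_length_eq_wordDist hS g h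
  obtain ⟨l₂, hl₂, hlen₂, hprod₂⟩ := exists_list_length_eq_wordDist hS h k
  calc wordDist S g k ≤ (l₂ ++ l₁).length :=
        wordDist_le_length (fun x hx => (List.mem_append.mp hx).elim (hl₂ x) (hl₁ x))
          (by rw [List.prod_append, ← mul_assoc, ← hprod₂, ← hprod₁])
    _ = wordDist S g h + wordDist S h k := by simp [hlen₁, hlen₂, add_comm]

theorem finite_setOf_wordDist_one_le (hS : IsFinSymmGenSet S) (R : ℕ) :
    {g : G | wordDist S 1 g ≤ R}.Finite := by
  have := hS.1.to_subtype
  refine ((List.finite_length_le S R).image fun l => (l.map Subtype.val).prod⁻¹).subset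
    fun g hg => ?_
  obtain ⟨l, hl, hlen, hprod⟩ := exists_list_length_eq_wordDist hS 1 g
  lift l to List S using hl
  refine ⟨l, show l.length ≤ R by rw [← List.length_map, hlen]; exact hg, ?_⟩
  simpa [eq_inv_iff_mul_eq_one, eq_comm] using hprod

theorem isGeodesicSeg_of_wordDist_succ_le (hS : IsFinSymmGenSet S) {c : ℕ → G} {g h : G}
    (h0 : c 0 = g) (hn : c (wordDist S g h) = h)
    (hstep : ∀ i < wordDist S g h, wordDist S (c i) (c (i + 1)) ≤ 1) :
    IsGeodesicSeg (wordDist S) c g h := by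
  set n := wordDist S g h
  have upper : ∀ i j, i ≤ j → j ≤ n → wordDist S (c i) (c j) ≤ j - i := by
    intro i j hij hjn
    induction j, hij using Nat.le_induction with
    | base => simp [wordDist_self]
    | succ j hij ih =>
      have := wordDist_triangle hS (c i) (c j) (c (j + 1))
      have := ih (by omega)
      have := hstep j (by omega)
      omega
  -- the lower bound comes from `n = d g h ≤ d g (c i) + d (c i) (c j) + d (c j) h`
  have hdist : ∀ i j, i ≤ j → j ≤ n → wordDist S (c i) (c j) = j - i := by
    intro i j hij hjn
    have hgi := upper 0 i (by omega) (by omega)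
    have hjh := upper j n hjn le_rfl
    rw [h0] at hgi
    rw [hn] at hjh
    have := wordDist_triangle hS g (c i) h
    have := wordDist_triangle hS (c i) (c j) h
    have := upper i j hij hjn
    omega
  refine ⟨h0, hn, fun i j hi hj => ?_⟩
  rcases le_total i j with hij | hij
  · rw [hdist i j hij hj, Nat.dist_eq_sub_of_le hij]
  · rw [wordDist_comm hS, hdist j i hij hi, Nat.dist_comm, Nat.dist_eq_sub_of_le hij]

theorem exists_isGeodesicSeg (hS : IsFinSymmGenSet S) (g h : G) :
    ∃ c, IsGeodesicSeg (wordDist S) c g h := by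
  obtain ⟨l, hl, hlen, hprod⟩ := exists_list_length_eq_wordDist hS h g
  rw [wordDist_comm hS] at hlen
  refine ⟨fun i => g * (l.take i).prod, isGeodesicSeg_of_wordDist_succ_le hS (by simp)
    (by rw [← hlen, List.take_length, hprod]) fun i hi => ?_⟩
  rw [wordDist_comm hS, List.prod_take_succ l i (by omega), ← mul_assoc]
  exact wordDist_le_length (l := [l[i]]) (by simpa using hl _ (List.getElem_mem _)) (by simp)

theorem IsGeodesicSeg.reverse (hS : IsFinSymmGenSet S) {c : ℕ → G} {g h : G}
    (hc : IsGeodesicSeg (wordDist S) c g h) :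
    IsGeodesicSeg (wordDist S) (fun k => c (wordDist S g h - k)) h g := by
  have hhg : wordDist S h g = wordDist S g h := wordDist_comm hS h g
  refine ⟨by simpa using hc.2.1, by simpa [hhg] using hc.1, fun i j hi hj => ?_⟩
  rw [hhg] at hi hj
  rw [hc.2.2 _ _ (by omega) (by omega)]
  simp only [Nat.dist]
  omega

theorem asymptotic_refl (c : ℕ → G) : Asymptotic (wordDist S) c c :=
  ⟨0, fun t => ⟨t, by rw [wordDist_self]⟩, fun t => ⟨t, by rw [wordDist_self]⟩⟩

theorem Asymptotic.trans (hS : IsFinSymmGenSet S) {a b c : ℕ → G}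
    (h₁ : Asymptotic (wordDist S) a b) (h₂ : Asymptotic (wordDist S) b c) :
    Asymptotic (wordDist S) a c := by
  obtain ⟨K₁, h₁₁, h₁₂⟩ := h₁
  obtain ⟨K₂, h₂₁, h₂₂⟩ := h₂
  refine ⟨K₁ + K₂, fun t => ?_, fun s => ?_⟩
  · obtain ⟨s₁, hs₁⟩ := h₁₁ t
    obtain ⟨s₂, hs₂⟩ := h₂₁ s₁
    exact ⟨s₂, (wordDist_triangle hS _ (b s₁) _).trans (add_le_add hs₁ hs₂)⟩
  · obtain ⟨t₁, ht₁⟩ := h₂₂ s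
    obtain ⟨t₂, ht₂⟩ := h₁₂ t₁
    exact ⟨t₂, (wordDist_triangle hS _ (b t₁) _).trans (by omega)⟩

theorem asymptotic_of_mk_eq (hS : IsFinSymmGenSet S) {c c' : GeodesicRays (wordDist S)}
    (h : (Quot.mk _ c : GromovBoundary (wordDist S)) = Quot.mk _ c') :
    Asymptotic (wordDist S) c.1 c'.1 := by
  have hequiv : Equivalence fun c c' : GeodesicRays (wordDist S) =>
      Asymptotic (wordDist S) c.1 c'.1 :=
    ⟨fun c => asymptotic_refl c.1, fun h => h.symm, fun h₁ h₂ => h₁.trans hS h₂⟩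
  exact hequiv.eqvGen_iff.mp (Quot.eqvGen_exact h)

end WordMetric

section Hyperbolic

variable {G : Type*} [Group G] {S : Set G} {δ : ℕ}

/-- In the triangle `a b p` the point `σ i` is `δ`-close to `[a, p]` or to `[p, b]`; if it is
farther than `d p a + δ` from `a`, only the second option remains. -/
theorem DiscHyperbolic.exists_wordDist_le (hS : IsFinSymmGenSet S)
    (hhyp : DiscHyperbolic (wordDist S) δ) {σ τ : ℕ → G} {a b p : G}
    (hσ : IsGeodesicSeg (wordDist S) σ a b) (hτ : IsGeodesicSeg (wordDist S) τ p b) {i : ℕ}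
    (hi : i ≤ wordDist S a b) (hfar : wordDist S p a + δ < i) :
    ∃ j ≤ wordDist S p b, wordDist S (σ i) (τ j) ≤ δ := by
  obtain ⟨ρ, hρ⟩ := exists_isGeodesicSeg hS p a
  obtain ⟨q, hq, hσq⟩ := hhyp a b p σ _ ρ hσ (hτ.reverse hS) hρ i hi
  rcases hq with ⟨j, -, rfl⟩ | ⟨j, hj, rfl⟩
  · exact ⟨_, Nat.sub_le _ _, hσq⟩
  · have hρj := hρ.2.2 j _ hj le_rfl
    rw [hρ.2.1, Nat.dist_eq_sub_of_le hj] at hρj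
    have := hσ.dist_start hi
    have := wordDist_triangle hS a (ρ j) (σ i)
    have := wordDist_comm hS a (ρ j)
    have := wordDist_comm hS (ρ j) (σ i)
    omega

theorem wordDist_le_two_mul_of_isGeodesicSeg (hS : IsFinSymmGenSet S)
    (hhyp : DiscHyperbolic (wordDist S) δ) {σ τ : ℕ → G} {a b b' : G}
    (hσ : IsGeodesicSeg (wordDist S) σ a b) (hτ : IsGeodesicSeg (wordDist S) τ a b') {K : ℕ}
    (hK : wordDist S b b' ≤ K) {i : ℕ} (hi : i + K + δ + 1 ≤ wordDist S a b) :
    wordDist S (σ i) (τ i) ≤ 2 * δ := by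
  have hb := wordDist_triangle hS a b' b
  have := wordDist_comm hS b b'
  -- in the reversed triangle the short side is `[b', b]`, so `σ i` is `δ`-close to some `τ t`,
  -- and comparing distances from `a` gives `|t - i| ≤ δ`
  obtain ⟨j, hj, hσj⟩ := hhyp.exists_wordDist_le hS (hσ.reverse hS) (hτ.reverse hS)
    (i := wordDist S a b - i) (by rw [wordDist_comm hS]; omega) (by omega)
  rw [wordDist_comm hS b' a] at hj
  simp only [Nat.sub_sub_self (show i ≤ wordDist S a b by omega)] at hσj
  set t := wordDist S a b' - j
  have := hσ.dist_start (i := i) (by omega)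
  have := hτ.dist_start (i := t) (by omega)
  have := wordDist_triangle hS a (σ i) (τ t)
  have := wordDist_triangle hS a (τ t) (σ i)
  have := wordDist_comm hS (σ i) (τ t)
  have hτti := hτ.2.2 t i (by omega) (by omega)
  have := wordDist_triangle hS (σ i) (τ t) (τ i)
  simp only [Nat.dist] at hτti
  omega

theorem IsGeodesicRay.wordDist_le_two_mul (hS : IsFinSymmGenSet S)
    (hhyp : DiscHyperbolic (wordDist S) δ) {α β : ℕ → G}
    (hα : IsGeodesicRay (wordDist S) α) (hβ : IsGeodesicRay (wordDist S) β) (h0 : α 0 = β 0)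
    {K n s : ℕ} (hK : wordDist S (α n) (β s) ≤ K) {i : ℕ} (hi : i + K + δ + 1 ≤ n) :
    wordDist S (α i) (β i) ≤ 2 * δ :=
  wordDist_le_two_mul_of_isGeodesicSeg hS hhyp (hα.isGeodesicSeg n)
    (h0 ▸ hβ.isGeodesicSeg s) hK (by rwa [hα.dist_zero])

theorem IsGeodesicRay.wordDist_le_two_mul_of_asymptotic (hS : IsFinSymmGenSet S)
    (hhyp : DiscHyperbolic (wordDist S) δ) {α β : ℕ → G}
    (hα : IsGeodesicRay (wordDist S) α) (hβ : IsGeodesicRay (wordDist S) β) (h0 : α 0 = β 0)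
    (hαβ : Asymptotic (wordDist S) α β) (i : ℕ) : wordDist S (α i) (β i) ≤ 2 * δ := by
  obtain ⟨K, hK, -⟩ := hαβ
  obtain ⟨s, hs⟩ := hK (i + K + δ + 1)
  exact hα.wordDist_le_two_mul hS hhyp hβ h0 hs le_rfl

theorem IsGeodesicRay.exists_wordDist_le_three_mul (hS : IsFinSymmGenSet S)
    (hhyp : DiscHyperbolic (wordDist S) δ) {α u : ℕ → G} (hα : IsGeodesicRay (wordDist S) α)
    (hu : IsGeodesicRay (wordDist S) u) (hα0 : α 0 = 1) (hαu : Asymptotic (wordDist S) α u)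
    {N : ℕ} (hN : 2 * wordDist S 1 (u 0) + δ + 1 ≤ N) :
    ∃ i, wordDist S (u N) (α i) ≤ 3 * δ := by
  set r := wordDist S 1 (u 0)
  obtain ⟨K, -, hK⟩ := hαu
  set T := N + 2 * r + K + 2 * δ + 1
  obtain ⟨t, ht⟩ := hK T
  obtain ⟨σ, hσ⟩ := exists_isGeodesicSeg hS 1 (u T)
  have := hu.dist_zero T
  have := hu.dist_zero N
  have := wordDist_comm hS 1 (u 0)
  obtain ⟨j, hjT, hj⟩ := hhyp.exists_wordDist_le hS (hu.isGeodesicSeg T) hσ (i := N)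
    (by omega) (by omega)
  have hαt := hα.isGeodesicSeg t
  rw [hα0] at hαt
  have := hσ.dist_start hjT
  have := wordDist_triangle hS 1 (u 0) (u T)
  have := wordDist_triangle hS (u 0) 1 (u T)
  have := wordDist_triangle hS 1 (u 0) (u N)
  have := wordDist_triangle hS 1 (u N) (σ j)
  have := wordDist_comm hS (u T) (α t)
  have := wordDist_le_two_mul_of_isGeodesicSeg hS hhyp hσ hαt (K := K) (by omega) (i := j)
    (by omega)
  exact ⟨j, (wordDist_triangle hS _ (σ j) _).trans (by omega)⟩

end Hyperbolic

section Boundary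

variable {G : Type*} [Group G] {S : Set G} {δ : ℕ}

theorem asymptotic_of_frequently_eqOn (hS : IsFinSymmGenSet S)
    (hhyp : DiscHyperbolic (wordDist S) δ) {u : ℕ → G} (hu : IsGeodesicRay (wordDist S) u)
    {σ : ℕ → ℕ → G} {γ : ℕ → G}
    (hσ : ∀ n, IsGeodesicSeg (wordDist S) (σ n) 1 (u n))
    (hlim : ∀ m N, ∃ n ≥ N, m ≤ wordDist S 1 (u n) ∧ ∀ i ≤ m, σ n i = γ i)
    (hγ0 : γ 0 = 1) :
    Asymptotic (wordDist S) γ u := by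
  set r := wordDist S 1 (u 0)
  have := wordDist_comm hS 1 (u 0)
  refine ⟨2 * r + δ, fun t => ?_, fun s => ?_⟩
  · obtain ⟨n, -, hn, h⟩ := hlim t 0
    rw [← h t le_rfl]
    have := (hσ n).dist_start hn
    by_cases ht : wordDist S (u 0) 1 + δ < t
    · obtain ⟨j, -, hj⟩ := hhyp.exists_wordDist_le hS (hσ n) (hu.isGeodesicSeg n) hn ht
      exact ⟨j, by omega⟩
    · refine ⟨0, (wordDist_triangle hS _ 1 _).trans ?_⟩
      have := wordDist_comm hS 1 (σ n t)
      omega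
  · obtain ⟨n, hn, hsn, h⟩ := hlim (s + 2 * r + δ) s
    have := hu.dist_zero s
    have := hu.dist_zero n
    by_cases hs : wordDist S 1 (u 0) + δ < s
    · obtain ⟨j, hj, hsj⟩ := hhyp.exists_wordDist_le hS (hu.isGeodesicSeg n) (hσ n) (i := s)
        (by omega) hs
      have := (hσ n).dist_start hj
      have := wordDist_triangle hS 1 (u 0) (u s)
      have := wordDist_triangle hS 1 (u s) (σ n j)
      refine ⟨j, ?_⟩
      rw [← h j (by omega)]
      omega
    · refine ⟨0, ?_⟩
      rw [hγ0]
      have := wordDist_triangle hS (u s) (u 0) 1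
      have := wordDist_comm hS (u 0) (u s)
      omega

/-- The ray is a limit of geodesics `σ n` from `1` to `u n`: extended constantly past its end,
`σ n` takes its value at time `i` in the finite ball of radius `i`. -/
theorem exists_isGeodesicRay_one_asymptotic (hS : IsFinSymmGenSet S)
    (hhyp : DiscHyperbolic (wordDist S) δ) {u : ℕ → G} (hu : IsGeodesicRay (wordDist S) u) :
    ∃ γ, IsGeodesicRay (wordDist S) γ ∧ γ 0 = 1 ∧ Asymptotic (wordDist S) γ u := by
  choose σ hσ using fun n => exists_isGeodesicSeg hS 1 (u n)
  obtain ⟨γ, hγ⟩ := exists_frequently_eqOn_Iic (finite_setOf_wordDist_one_le hS)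
    (fun n i => σ n (min i (wordDist S 1 (u n))))
    fun n i => by simp [(hσ n).dist_start (min_le_right _ _)]
  have hlim : ∀ m N, ∃ n ≥ N, m ≤ wordDist S 1 (u n) ∧ ∀ i ≤ m, σ n i = γ i := by
    intro m N
    obtain ⟨n, hn, h⟩ := hγ m (N + m + wordDist S 1 (u 0))
    have := wordDist_triangle hS (u 0) 1 (u n)
    have := wordDist_comm hS 1 (u 0)
    have := hu.dist_zero n
    refine ⟨n, by omega, by omega, fun i hi => ?_⟩
    simpa [min_eq_left (show i ≤ wordDist S 1 (u n) by omega)] using h i hi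
  obtain ⟨hγ, hγ0⟩ := isGeodesicRay_of_frequently_eqOn hσ hlim
  exact ⟨γ, hγ, hγ0, asymptotic_of_frequently_eqOn hS hhyp hu hσ hlim hγ0⟩

theorem exists_geodesicRays_one_mk (hS : IsFinSymmGenSet S) (hhyp : DiscHyperbolic (wordDist S) δ)
    (x : GromovBoundary (wordDist S)) :
    ∃ c : GeodesicRays (wordDist S), c.1 0 = 1 ∧ Quot.mk _ c = x := by
  obtain ⟨c₀, rfl⟩ := Quot.exists_rep x
  obtain ⟨γ, hγ, hγ0, hγc₀⟩ := exists_isGeodesicRay_one_asymptotic hS hhyp c₀.2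
  exact ⟨⟨γ, hγ⟩, hγ0, Quot.sound hγc₀⟩

/-- The paper's `𝒩_x^n`, with all geodesic rays from `1` in place of the rays of DSGs. -/
def FellowTravels (S : Set G) (δ n : ℕ) (x y : GromovBoundary (wordDist S)) : Prop :=
  ∀ c c' : GeodesicRays (wordDist S), c.1 0 = 1 → c'.1 0 = 1 → Quot.mk _ c = x →
    Quot.mk _ c' = y → ∀ i ≤ n, wordDist S (c.1 i) (c'.1 i) ≤ 2 * δ

theorem fellowTravels_refl (hS : IsFinSymmGenSet S) (hhyp : DiscHyperbolic (wordDist S) δ)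
    (n : ℕ) (x : GromovBoundary (wordDist S)) : FellowTravels S δ n x x :=
  fun c c' h0 h0' hc hc' i _ => c.2.wordDist_le_two_mul_of_asymptotic hS hhyp c'.2
    (h0.trans h0'.symm) (asymptotic_of_mk_eq hS (hc.trans hc'.symm)) i

theorem FellowTravels.symm (hS : IsFinSymmGenSet S) {n : ℕ} {x y : GromovBoundary (wordDist S)}
    (h : FellowTravels S δ n x y) : FellowTravels S δ n y x :=
  fun c c' h0 h0' hc hc' i hi => wordDist_comm hS _ _ ▸ h c' c h0' h0 hc' hc i hi

theorem FellowTravels.trans (hS : IsFinSymmGenSet S) (hhyp : DiscHyperbolic (wordDist S) δ)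
    {n : ℕ} {x y z : GromovBoundary (wordDist S)}
    (hxy : FellowTravels S δ (n + (5 * δ + 1)) x y)
    (hyz : FellowTravels S δ (n + (5 * δ + 1)) y z) : FellowTravels S δ n x z := by
  intro α γ hα0 hγ0 hα hγ i hi
  obtain ⟨β, hβ0, hβ⟩ := exists_geodesicRays_one_mk hS hhyp y
  set N := n + (5 * δ + 1)
  have hαβ := hxy α β hα0 hβ0 hα hβ N le_rfl
  have hβγ := hyz β γ hβ0 hγ0 hβ hγ N le_rfl
  exact α.2.wordDist_le_two_mul hS hhyp γ.2 (hα0.trans hγ0.symm) (K := 4 * δ) (n := N) (s := N)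
    ((wordDist_triangle hS _ (β.1 N) _).trans (by omega)) (by omega)

theorem exists_forall_fellowTravels_of_eqOn (hS : IsFinSymmGenSet S)
    (hhyp : DiscHyperbolic (wordDist S) δ) (u : GeodesicRays (wordDist S)) (n : ℕ) :
    ∃ M, ∀ v : GeodesicRays (wordDist S), (∀ i ≤ M, v.1 i = u.1 i) →
      FellowTravels S δ n (Quot.mk _ u) (Quot.mk _ v) := by
  set r := wordDist S 1 (u.1 0)
  refine ⟨n + 2 * r + 10 * δ + 1, fun v hv α β hα0 hβ0 hα hβ i hi => ?_⟩
  set M := n + 2 * r + 10 * δ + 1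
  obtain ⟨i₁, h₁⟩ := α.2.exists_wordDist_le_three_mul hS hhyp u.2 hα0
    (asymptotic_of_mk_eq hS hα) (N := M) (by omega)
  obtain ⟨i₂, h₂⟩ := β.2.exists_wordDist_le_three_mul hS hhyp v.2 hβ0
    (asymptotic_of_mk_eq hS hβ) (N := M) (by rw [hv 0 (Nat.zero_le _)]; omega)
  rw [hv M le_rfl] at h₂
  have hαi₁ := α.2.dist_zero i₁
  rw [hα0] at hαi₁
  have := u.2.dist_zero M
  have := wordDist_triangle hS (u.1 0) 1 (u.1 M)
  have := wordDist_triangle hS 1 (α.1 i₁) (u.1 M)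
  have := wordDist_comm hS (u.1 0) 1
  have := wordDist_comm hS (α.1 i₁) (u.1 M)
  exact α.2.wordDist_le_two_mul hS hhyp β.2 (hα0.trans hβ0.symm) (K := 6 * δ)
    (n := i₁) (s := i₂) ((wordDist_triangle hS _ (u.1 M) _).trans (by omega)) (by omega)

theorem isOpen_raysTop_setOf_eqOn {α : Type*} {d : α → α → ℕ} (f : ℕ → α) (M : ℕ) :
    IsOpen[raysTop d] {v | ∀ i ≤ M, v.1 i = f i} := by
  let _ : TopologicalSpace α := ⊥
  have _ : DiscreteTopology α := ⟨rfl⟩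
  exact isOpen_induced (isOpen_set_pi (Set.finite_Iic M) fun i _ => isOpen_discrete {f i})

theorem isOpen_of_forall_fellowTravels (hS : IsFinSymmGenSet S)
    (hhyp : DiscHyperbolic (wordDist S) δ) {O : Set (GromovBoundary (wordDist S))}
    (hO : ∀ y ∈ O, ∃ j, ∀ z, FellowTravels S δ j y z → z ∈ O) :
    IsOpen[boundaryTop (wordDist S)] O := by
  let _ := raysTop (wordDist S)
  refine isOpen_coinduced.mpr (isOpen_iff_forall_mem_open.mpr fun u hu => ?_)
  obtain ⟨j, hj⟩ := hO _ hu
  obtain ⟨M, hM⟩ := exists_forall_fellowTravels_of_eqOn hS hhyp u j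
  exact ⟨_, fun v hv => hj _ (hM v hv), isOpen_raysTop_setOf_eqOn u.1 M, fun i _ => rfl⟩

/-- Points whose rays from `1` pass through the same point of the sphere of radius
`n + 5δ + 1` are `n`-close, and that sphere is finite. -/
theorem exists_finite_forall_fellowTravels (hS : IsFinSymmGenSet S)
    (hhyp : DiscHyperbolic (wordDist S) δ) (n : ℕ) :
    ∃ F : Set (GromovBoundary (wordDist S)),
      F.Finite ∧ ∀ x, ∃ c ∈ F, FellowTravels S δ n c x := by
  choose Γ hΓ0 hΓ using exists_geodesicRays_one_mk hS hhyp
  set Λ := n + 5 * δ + 1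
  set f := fun x => (Γ x).1 Λ
  have hf : (Set.range f).Finite := (finite_setOf_wordDist_one_le hS Λ).subset <| by
    rintro _ ⟨x, rfl⟩
    simpa [f, ← hΓ0 x] using ((Γ x).2.dist_zero Λ).le
  have := hf.to_subtype
  refine ⟨Set.range fun g : Set.range f => g.2.choose, Set.finite_range _, fun x =>
    ⟨_, ⟨⟨f x, x, rfl⟩, rfl⟩, ?_⟩⟩
  set c := (⟨f x, x, rfl⟩ : Set.range f).2.choose
  have hc : f c = f x := (⟨f x, x, rfl⟩ : Set.range f).2.choose_spec
  intro α β hα0 hβ0 hα hβ i hi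
  have hαc := α.2.wordDist_le_two_mul_of_asymptotic hS hhyp (Γ c).2 (hα0.trans (hΓ0 c).symm)
    (asymptotic_of_mk_eq hS (hα.trans (hΓ c).symm)) Λ
  have hxβ := (Γ x).2.wordDist_le_two_mul_of_asymptotic hS hhyp β.2 ((hΓ0 x).trans hβ0.symm)
    (asymptotic_of_mk_eq hS ((hΓ x).trans hβ.symm)) Λ
  rw [show (Γ c).1 Λ = (Γ x).1 Λ from hc] at hαc
  exact α.2.wordDist_le_two_mul hS hhyp β.2 (hα0.trans hβ0.symm) (K := 4 * δ)
    (n := Λ) (s := Λ) ((wordDist_triangle hS _ ((Γ x).1 Λ) _).trans (by omega)) (by omega)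

end Boundary

theorem boundary_inverse_Lebesgue_general {G : Type*} [Group G] (S : Set G)
    (hS : IsFinSymmGenSet S) (δ : ℕ) (hhyp : DiscHyperbolic (wordDist S) δ)
    (l : ℕ) :
    ∃ (n : ℕ) (U : Fin n → Set (GromovBoundary (wordDist S))),
      (∀ i, @IsOpen _ (boundaryTop (wordDist S)) (U i)) ∧
      (⋃ i, U i) = Set.univ ∧
      ∀ (i : Fin n) (x x' : GromovBoundary (wordDist S)), x ∈ U i → x' ∈ U i →
        ∀ m m' : DSGs (wordDist S) S,
          Qmap (wordDist S) S m = x → Qmap (wordDist S) S m' = x' →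
          ∀ j ≤ l, wordDist S (dsgRay m.1 1 j) (dsgRay m'.1 1 j) ≤ 2 * δ := by
  have htrans : ∀ n x y z, FellowTravels S δ (n + (5 * δ + 1)) x y →
      FellowTravels S δ (n + (5 * δ + 1)) y z → FellowTravels S δ n x z :=
    fun _ _ _ _ => FellowTravels.trans hS hhyp
  set k := l + (5 * δ + 1)
  obtain ⟨F, hF, hnet⟩ := exists_finite_forall_fellowTravels hS hhyp (k + (5 * δ + 1))
  have := hF.to_subtype
  obtain ⟨n, ⟨e⟩⟩ := Finite.exists_equiv_fin F
  refine ⟨n, fun i => innerBall (FellowTravels S δ) k (e.symm i), fun i => ?_, ?_, ?_⟩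
  · exact isOpen_of_forall_fellowTravels hS hhyp fun y hy => exists_forall_mem_innerBall htrans hy
  · refine Set.eq_univ_of_forall fun x => Set.mem_iUnion.mpr ?_
    obtain ⟨c, hc, hcx⟩ := hnet x
    exact ⟨e ⟨c, hc⟩, by simpa using mem_innerBall htrans hcx⟩
  · intro i x x' hx hx' m m' hm hm'
    have hball := innerBall_subset (fellowTravels_refl hS hhyp) k (e.symm i)
    exact htrans l _ _ _ ((hball hx).symm hS) (hball hx') _ _ rfl rfl hm hm'

/-- inverse Lebesgue lemma: for every `l > 8δ` there is a finite open
cover of `∂G` such that any two points in a common element of the cover have all their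
DSG representatives `2δ`-fellow travelling up to time `l`. -/
theorem boundary_inverse_Lebesgue {G : Type*} [Group G] (S : Set G)
    (hS : IsFinSymmGenSet S) (δ : ℕ) (hhyp : DiscHyperbolic (wordDist S) δ)
    (l : ℕ) (hl : 8 * δ < l) :
    ∃ (n : ℕ) (U : Fin n → Set (GromovBoundary (wordDist S))),
      (∀ i, @IsOpen _ (boundaryTop (wordDist S)) (U i)) ∧
      (⋃ i, U i) = Set.univ ∧
      ∀ (i : Fin n) (x x' : GromovBoundary (wordDist S)), x ∈ U i → x' ∈ U i →
        ∀ m m' : DSGs (wordDist S) S,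
          Qmap (wordDist S) S m = x → Qmap (wordDist S) S m' = x' →
          ∀ j ≤ l, wordDist S (dsgRay m.1 1 j) (dsgRay m'.1 1 j) ≤ 2 * δ :=
  boundary_inverse_Lebesgue_general S hS δ hhyp l
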